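/- arXiv:1907.11005 — 6 statements merged into one kernel-verified Lean document; each statement's English description precedes it below -/
import Mathlib

section
/- Let q be a primitive ℓ-th root of unity with ℓ > 1 odd. Then the elements x_i^ℓ and ∂_i^ℓ, for 1 ≤ i ≤ N, are central in D_q(C^N). -/
noncomputable section

/-- Generators of the quantum Weyl algebra D_q(ℂ^N). -/
inductive DGen (N : ℕ) : Type
  | x (i : Fin N)
  | p (i : Fin N)

/-- The generator x_i in the free algebra. -/
def Xf (N : ℕ) (i : Fin N) : FreeAlgebra ℂ (DGen N) := FreeAlgebra.ι ℂ (DGen.x i)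

/-- The generator ∂_i in the free algebra. -/
def Pf (N : ℕ) (i : Fin N) : FreeAlgebra ℂ (DGen N) := FreeAlgebra.ι ℂ (DGen.p i)

/-- The defining relations of D_q(ℂ^N). -/
inductive DqRel (q : ℂ) (N : ℕ) : FreeAlgebra ℂ (DGen N) → FreeAlgebra ℂ (DGen N) → Prop
  | xx {i j : Fin N} (h : i < j) : DqRel q N (Xf N j * Xf N i) (q • (Xf N i * Xf N j))
  | pp {i j : Fin N} (h : i < j) : DqRel q N (Pf N j * Pf N i) (q⁻¹ • (Pf N i * Pf N j))
  | px {i j : Fin N} (h : j ≠ i) : DqRel q N (Pf N j * Xf N i) (q • (Xf N i * Pf N j))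
  | pxi (i : Fin N) : DqRel q N (Pf N i * Xf N i)
      (q ^ 2 • (Xf N i * Pf N i) + (q ^ 2 - 1) •
        (1 + ∑ j ∈ Finset.univ.filter (fun j : Fin N => j < i), Xf N j * Pf N j))

/-- The quantum Weyl algebra D_q(ℂ^N), presented by generators and relations. -/
abbrev DqWeyl (q : ℂ) (N : ℕ) := RingQuot (DqRel q N)

/-- The image of x_i in D_q(ℂ^N). -/
def xg (q : ℂ) (N : ℕ) (i : Fin N) : DqWeyl q N := RingQuot.mkAlgHom ℂ (DqRel q N) (Xf N i)

/-- The image of ∂_i in D_q(ℂ^N). -/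
def pg (q : ℂ) (N : ℕ) (i : Fin N) : DqWeyl q N := RingQuot.mkAlgHom ℂ (DqRel q N) (Pf N i)

namespace DqAux

variable (q : ℂ) (N : ℕ)

/-- The element 1 + Σ_{j<i} x_j ∂_j. -/
def Tg (i : Fin N) : DqWeyl q N :=
  1 + ∑ j ∈ Finset.univ.filter (fun j : Fin N => j < i), xg q N j * pg q N j

variable {q N}

lemma rel_xx {i j : Fin N} (h : i < j) :
    xg q N j * xg q N i = q • (xg q N i * xg q N j) := by
  have := RingQuot.mkAlgHom_rel ℂ (DqRel.xx (q := q) h)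
  simpa [xg, map_mul, map_smul] using this

lemma rel_pp {i j : Fin N} (h : i < j) :
    pg q N j * pg q N i = q⁻¹ • (pg q N i * pg q N j) := by
  have := RingQuot.mkAlgHom_rel ℂ (DqRel.pp (q := q) h)
  simpa [pg, map_mul, map_smul] using this

lemma rel_px {i j : Fin N} (h : j ≠ i) :
    pg q N j * xg q N i = q • (xg q N i * pg q N j) := by
  have := RingQuot.mkAlgHom_rel ℂ (DqRel.px (q := q) h)
  simpa [xg, pg, map_mul, map_smul] using this

lemma rel_pxi (i : Fin N) :
    pg q N i * xg q N i = q ^ 2 • (xg q N i * pg q N i) + (q ^ 2 - 1) • Tg q N i := by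
  have := RingQuot.mkAlgHom_rel ℂ (DqRel.pxi (q := q) (N := N) i)
  simpa [xg, pg, Tg, map_mul, map_smul, map_add, map_sum, map_one] using this

/-- generic: if g z = c • (z g) then g z^n = c^n • (z^n g). -/
lemma pow_comm_aux {A : Type*} [Ring A] [Algebra ℂ A] {c : ℂ} {g z : A}
    (h : g * z = c • (z * g)) (n : ℕ) : g * z ^ n = c ^ n • (z ^ n * g) := by
  induction n with
  | zero => simp
  | succ n ih =>
    rw [pow_succ, ← mul_assoc, ih, smul_mul_assoc, mul_assoc, h, mul_smul_comm, smul_smul]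
    simp [pow_succ, mul_assoc]

lemma Tg_comm_X (hq0 : q ≠ 0) (i : Fin N) : Tg q N i * xg q N i = xg q N i * Tg q N i := by
  have hq : ∀ k : Fin N, k < i →
      (xg q N k * pg q N k) * xg q N i = xg q N i * (xg q N k * pg q N k) := by
    intro k hk
    have h1 : pg q N k * xg q N i = q • (xg q N i * pg q N k) := rel_px hk.ne
    have h2 : xg q N i * xg q N k = q • (xg q N k * xg q N i) := rel_xx hk
    have h2' : xg q N k * xg q N i = q⁻¹ • (xg q N i * xg q N k) := by
      rw [h2, smul_smul, inv_mul_cancel₀ hq0, one_smul]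
    rw [mul_assoc, h1, mul_smul_comm, ← mul_assoc, h2', smul_mul_assoc, smul_smul,
      mul_inv_cancel₀ hq0, one_smul, mul_assoc]
  unfold Tg
  rw [add_mul, mul_add, one_mul, mul_one, Finset.sum_mul, Finset.mul_sum]
  congr 1
  refine Finset.sum_congr rfl fun k hk => ?_
  exact hq k (by simpa using hk)

lemma Tg_comm_P (hq0 : q ≠ 0) (i : Fin N) : pg q N i * Tg q N i = Tg q N i * pg q N i := by
  have hq : ∀ k : Fin N, k < i →
      pg q N i * (xg q N k * pg q N k) = (xg q N k * pg q N k) * pg q N i := by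
    intro k hk
    have h1 : pg q N i * xg q N k = q • (xg q N k * pg q N i) := rel_px hk.ne'
    have h2 : pg q N i * pg q N k = q⁻¹ • (pg q N k * pg q N i) := rel_pp hk
    rw [← mul_assoc, h1, smul_mul_assoc, mul_assoc, h2]
    simp [smul_smul, mul_assoc, mul_inv_cancel₀ hq0]
  unfold Tg
  rw [add_mul, mul_add, one_mul, mul_one, Finset.sum_mul, Finset.mul_sum]
  congr 1
  refine Finset.sum_congr rfl fun k hk => ?_
  exact hq k (by simpa using hk)

/-- ∂_i x_i^{n+1} = q^{2(n+1)} x_i^{n+1} ∂_i + (q^{2(n+1)} - 1) x_i^n T_i. -/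
lemma P_Xpow (hq0 : q ≠ 0) (i : Fin N) (n : ℕ) :
    pg q N i * xg q N i ^ (n + 1) =
      (q ^ 2) ^ (n + 1) • (xg q N i ^ (n + 1) * pg q N i) +
      ((q ^ 2) ^ (n + 1) - 1) • (xg q N i ^ n * Tg q N i) := by
  induction n with
  | zero => simpa using rel_pxi i
  | succ n ih =>
    have hTX := Tg_comm_X (q := q) (N := N) hq0 i
    have hstep : pg q N i * xg q N i ^ (n + 2) = (pg q N i * xg q N i ^ (n + 1)) * xg q N i := by
      rw [pow_succ, ← mul_assoc]
    rw [hstep, ih, add_mul, smul_mul_assoc, smul_mul_assoc, mul_assoc, rel_pxi i,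
      mul_assoc, hTX, ← mul_assoc, ← pow_succ]
    rw [mul_add, mul_smul_comm, mul_smul_comm, ← mul_assoc, ← pow_succ]
    module

/-- ∂_i^{n+1} x_i = q^{2(n+1)} x_i ∂_i^{n+1} + (q^{2(n+1)} - 1) T_i ∂_i^n. -/
lemma Ppow_X (hq0 : q ≠ 0) (i : Fin N) (n : ℕ) :
    pg q N i ^ (n + 1) * xg q N i =
      (q ^ 2) ^ (n + 1) • (xg q N i * pg q N i ^ (n + 1)) +
      ((q ^ 2) ^ (n + 1) - 1) • (Tg q N i * pg q N i ^ n) := by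
  induction n with
  | zero => simpa using rel_pxi i
  | succ n ih =>
    have hTP := Tg_comm_P (q := q) (N := N) hq0 i
    have hstep : pg q N i ^ (n + 2) * xg q N i = pg q N i * (pg q N i ^ (n + 1) * xg q N i) := by
      rw [pow_succ', mul_assoc]
    rw [hstep, ih, mul_add, mul_smul_comm, mul_smul_comm, ← mul_assoc, rel_pxi i,
      ← mul_assoc, hTP]
    rw [add_mul, smul_mul_assoc, smul_mul_assoc, mul_assoc, ← pow_succ', mul_assoc, ← pow_succ']
    module

end DqAux

open DqAux in
lemma central_of_gen_comm {q : ℂ} {N : ℕ} (z : DqWeyl q N)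
    (hx : ∀ j, xg q N j * z = z * xg q N j) (hp : ∀ j, pg q N j * z = z * pg q N j) :
    z ∈ Subalgebra.center ℂ (DqWeyl q N) := by
  rw [Subalgebra.mem_center_iff]
  intro b
  obtain ⟨a, rfl⟩ := RingQuot.mkAlgHom_surjective ℂ (DqRel q N) b
  induction a using FreeAlgebra.induction with
  | grade0 r => simp [Algebra.commutes]
  | grade1 g =>
    cases g with
    | x j => exact hx j
    | p j => exact hp j
  | mul a b ha hb => rw [map_mul, mul_assoc, hb, ← mul_assoc, ha, mul_assoc]
  | add a b ha hb => rw [map_add, add_mul, ha, hb, mul_add]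

open DqAux in
/-- at a primitive ℓ-th root of unity q (ℓ > 1 odd), the elements
x_i^ℓ and ∂_i^ℓ are central in D_q(ℂ^N). -/
theorem stmt_4 (q : ℂ) (l : ℕ) (hl : 1 < l) (hodd : Odd l) (hq : IsPrimitiveRoot q l)
    (N : ℕ) (i : Fin N) :
    xg q N i ^ l ∈ Subalgebra.center ℂ (DqWeyl q N) ∧
    pg q N i ^ l ∈ Subalgebra.center ℂ (DqWeyl q N) := by
  have hql : q ^ l = 1 := hq.pow_eq_one
  have hq0 : q ≠ 0 := by
    intro h
    rw [h, zero_pow (by omega)] at hql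
    exact zero_ne_one hql
  have hqinv : q⁻¹ ^ l = 1 := by rw [inv_pow, hql, inv_one]
  have hq2l : (q ^ 2) ^ l = 1 := by rw [← pow_mul, mul_comm, pow_mul, hql, one_pow]
  obtain ⟨m, hm⟩ : ∃ m, l = m + 1 := ⟨l - 1, by omega⟩
  constructor
  · refine central_of_gen_comm _ (fun j => ?_) (fun j => ?_)
    · rcases lt_trichotomy j i with h | h | h
      · have hr : xg q N j * xg q N i = q⁻¹ • (xg q N i * xg q N j) := by
          rw [rel_xx h, smul_smul, inv_mul_cancel₀ hq0, one_smul]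
        rw [pow_comm_aux hr, hqinv, one_smul]
      · subst h; rw [← pow_succ', ← pow_succ]
      · rw [pow_comm_aux (rel_xx h), hql, one_smul]
    · rcases eq_or_ne j i with h | h
      · subst h
        have hq2m : (q ^ 2) ^ (m + 1) = 1 := by rw [← hm]; exact hq2l
        rw [hm, P_Xpow hq0, hq2m, one_smul, sub_self, zero_smul, add_zero]
      · rw [pow_comm_aux (rel_px h), hql, one_smul]
  · refine central_of_gen_comm _ (fun j => ?_) (fun j => ?_)
    · rcases eq_or_ne j i with h | h
      · subst h
        have hq2m : (q ^ 2) ^ (m + 1) = 1 := by rw [← hm]; exact hq2l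
        have := Ppow_X (q := q) (N := N) hq0 j m
        rw [hq2m, one_smul, sub_self, zero_smul, add_zero, ← hm] at this
        exact this.symm
      · have hr : xg q N j * pg q N i = q⁻¹ • (pg q N i * xg q N j) := by
          rw [rel_px (Ne.symm h), smul_smul, inv_mul_cancel₀ hq0, one_smul]
        rw [pow_comm_aux hr, hqinv, one_smul]
    · rcases lt_trichotomy j i with h | h | h
      · have hr : pg q N j * pg q N i = q • (pg q N i * pg q N j) := by
          rw [rel_pp h, smul_smul, mul_inv_cancel₀ hq0, one_smul]
        rw [pow_comm_aux hr, hql, one_smul]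
      · subst h; rw [← pow_succ', ← pow_succ]
      · rw [pow_comm_aux (rel_pp h), hqinv, one_smul]

end
end

section
/- Let q be a primitive ℓ-th root of unity with ℓ > 1 odd. Then in D_q(C^N), for each i = 0,1,...,N, the identity β_i^ℓ = 1 + Σ_{j=1}^{i} x_j^ℓ ∂_j^ℓ holds (note: the index runs over all j ≤ i). -/
/-! Put `c = β_i`, `a = x_{i+1}`, `b = ∂_{i+1}`, so that `β_{i+1} = c + a b`, `c` commutes with `a`
and `b`, and `b a = q² a b + (q² - 1) c`. Then `v = c + a b` satisfies `a v = q⁻² v a`, which gives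
`a^k b^k = ∏_{j < k} (q^{-2j} v - c)`, a polynomial in the commuting pair `v, c`. As `ℓ` is odd,
`q⁻²` is again a primitive `ℓ`-th root of unity, and for `k = ℓ` the product is `v^ℓ - c^ℓ`.
Hence `β_{i+1}^ℓ = β_i^ℓ + x_{i+1}^ℓ ∂_{i+1}^ℓ`, and the formula follows by induction on `i`. -/

open Finset Polynomial

theorem prod_range_C_pow_mul_sub_X {R : Type*} [CommRing R] [IsDomain R] {ζ : R} {n : ℕ}
    (hζ : IsPrimitiveRoot ζ n) (hn : Odd n) (α : R) :
    ∏ i ∈ range n, (C (ζ ^ i * α) - X) = C (α ^ n) - X ^ n := by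
  calc ∏ i ∈ range n, (C (ζ ^ i * α) - X) = ∏ i ∈ range n, (-1 * (X - C (ζ ^ i * α))) := by
        simp only [neg_one_mul, neg_sub]
    _ = -(X ^ n - C (α ^ n)) := by
        rw [prod_mul_distrib, prod_const, card_range, hn.neg_one_pow, neg_one_mul,
          X_pow_sub_C_eq_prod hζ hn.pos rfl]
    _ = C (α ^ n) - X ^ n := neg_sub _ _

section SkewCommuting

variable {K A : Type*} [CommRing K] [Ring A] [Algebra K A]

theorem commute_mul_of_mul_eq_smul {u : K} {a b c : A} (hbc : b * c = u • (c * b))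
    (hca : c * a = u • (a * c)) : Commute (a * b) c := by
  rw [Commute, SemiconjBy, mul_assoc, hbc, ← mul_assoc, hca, mul_smul_comm, smul_mul_assoc,
    mul_assoc]

theorem pow_mul_eq_smul_mul_pow {ζ : K} {a v : A} (h : a * v = ζ • (v * a)) (k : ℕ) :
    a ^ k * v = ζ ^ k • (v * a ^ k) := by
  induction k with
  | zero => simp
  | succ k ih =>
    rw [pow_succ', mul_assoc, ih, mul_smul_comm, ← mul_assoc, h, smul_mul_assoc, smul_smul,
      mul_assoc, pow_succ]

theorem pow_mul_pow_eq_sub_pow [IsDomain K] {ζ : K} {n : ℕ} (hζ : IsPrimitiveRoot ζ n)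
    (hn : Odd n) {a b v c : A} (hvc : Commute v c) (hca : Commute c a)
    (hav : a * v = ζ • (v * a)) (hab : a * b = v - c) :
    a ^ n * b ^ n = v ^ n - c ^ n := by
  let φ : K[X][X] →ₐ[K] A := eval₂AlgHom (aeval v) c fun r =>
    (Algebra.commute_of_mem_adjoin_singleton_of_commute
      (by rw [Algebra.adjoin_singleton_eq_range_aeval]; exact ⟨r, rfl⟩) hvc.symm).symm
  have hφX : φ X = c := eval₂_X _ _
  have hφC : ∀ r, φ (C r) = aeval v r := fun r => eval₂_C _ _
  have hφζ : ∀ i, φ (C (C ζ ^ i * X)) = ζ ^ i • v := fun i => by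
    rw [hφC, map_mul, map_pow, aeval_C, aeval_X, ← map_pow, ← Algebra.smul_def]
  have hstep : ∀ k, a ^ k * b ^ k = φ (∏ i ∈ range k, (C (C ζ ^ i * X) - X)) := by
    intro k
    induction k with
    | zero => simp
    | succ k ih =>
      rw [prod_range_succ, mul_comm, map_mul, ← ih, map_sub, hφX, hφζ]
      calc a ^ (k + 1) * b ^ (k + 1) = a ^ k * (a * b) * b ^ k := by
            rw [pow_succ, pow_succ', mul_assoc, mul_assoc, mul_assoc]
        _ = (ζ ^ k • v - c) * (a ^ k * b ^ k) := by
            rw [hab, mul_sub, pow_mul_eq_smul_mul_pow hav, ← (hca.pow_right k).eq]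
            simp only [sub_mul, smul_mul_assoc, mul_assoc]
  have hCζ : IsPrimitiveRoot (C ζ) n := hζ.map_of_injective C_injective
  rw [hstep, prod_range_C_pow_mul_sub_X hCζ hn, map_sub, hφC, map_pow, map_pow, aeval_X,
    hφX]

end SkewCommuting

theorem add_mul_pow_eq_pow_add_pow_mul_pow {K A : Type*} [Field K] [Ring A] [Algebra K A]
    {Q : K} {n : ℕ} (hQ : IsPrimitiveRoot Q n) (hn : Odd n) {a b c : A} (hca : Commute c a)
    (hcb : Commute c b) (hba : b * a = Q • (a * b) + (Q - 1) • c) :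
    (c + a * b) ^ n = c ^ n + a ^ n * b ^ n := by
  have hQ0 : Q ≠ 0 := hQ.ne_zero hn.pos.ne'
  have hva : (c + a * b) * a = Q • (a * (c + a * b)) := by
    rw [add_mul, mul_assoc, hba, hca.eq]
    simp only [mul_add, mul_smul_comm]
    module
  have hav : a * (c + a * b) = Q⁻¹ • ((c + a * b) * a) := by
    rw [hva, smul_smul, inv_mul_cancel₀ hQ0, one_smul]
  have hvc : Commute (c + a * b) c := ((Commute.refl c).add_right (hca.mul_right hcb)).symm
  rw [pow_mul_pow_eq_sub_pow hQ.inv hn hvc hca hav (add_sub_cancel_left c _).symm]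
  abel

theorem sum_filter_val_lt_succ {M : Type*} [AddCommMonoid M] {N i : ℕ} (hi : i < N)
    (f : Fin N → M) :
    ∑ j ∈ univ.filter (fun j : Fin N => (j : ℕ) < i + 1), f j =
      f ⟨i, hi⟩ + ∑ j ∈ univ.filter (fun j : Fin N => (j : ℕ) < i), f j := by
  rw [← sum_insert (by simp)]
  congr 1
  ext j
  simp only [mem_filter, mem_univ, true_and, mem_insert, Fin.ext_iff]
  omega

theorem stmt_5_general (q : ℂ) (l : ℕ) (hodd : Odd l) (hq : IsPrimitiveRoot q l) (N : ℕ)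
    (A : Type) [Ring A] [Algebra ℂ A]
    (x p : Fin N → A)
    (hxx : ∀ i j : Fin N, i < j → x j * x i = q • (x i * x j))
    (hpp : ∀ i j : Fin N, i < j → p j * p i = q⁻¹ • (p i * p j))
    (hpx : ∀ i j : Fin N, j ≠ i → p j * x i = q • (x i * p j))
    (β : ℕ → A)
    (hβ : ∀ m : ℕ, β m =
      1 + ∑ j ∈ Finset.univ.filter (fun j : Fin N => (j : ℕ) < m), x j * p j)
    (hpxi : ∀ i : Fin N, p i * x i = q ^ 2 • (x i * p i) + (q ^ 2 - 1) • β (i : ℕ)) :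
    ∀ i : ℕ, i ≤ N →
      β i ^ l =
        1 + ∑ j ∈ Finset.univ.filter (fun j : Fin N => (j : ℕ) < i), x j ^ l * p j ^ l := by
  have hq0 : q ≠ 0 := hq.ne_zero hodd.pos.ne'
  have hβ_commute (k : Fin N) : Commute (β k) (x k) ∧ Commute (β k) (p k) := by
    have hterm (j : Fin N) (hj : j ∈ univ.filter (fun j : Fin N => (j : ℕ) < k)) :
        Commute (x j * p j) (x k) ∧ Commute (x j * p j) (p k) := by
      have hjk : j < k := (mem_filter.1 hj).2
      refine ⟨commute_mul_of_mul_eq_smul (hpx k j hjk.ne) (hxx j k hjk),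
        commute_mul_of_mul_eq_smul ?_ (hpx j k hjk.ne')⟩
      rw [hpp j k hjk, smul_smul, mul_inv_cancel₀ hq0, one_smul]
    rw [hβ]
    exact ⟨(Commute.one_left _).add_left (Commute.sum_left _ _ _ fun j hj => (hterm j hj).1),
      (Commute.one_left _).add_left (Commute.sum_left _ _ _ fun j hj => (hterm j hj).2)⟩
  have hq2 : IsPrimitiveRoot (q ^ 2) l := hq.pow_of_coprime 2 (Nat.coprime_two_left.2 hodd)
  intro i
  induction i with
  | zero => simp [hβ]
  | succ i ih =>
    intro hi
    have hβ_succ : β (i + 1) = β i + x ⟨i, hi⟩ * p ⟨i, hi⟩ := by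
      rw [hβ, hβ, sum_filter_val_lt_succ hi, add_left_comm, add_comm _ (x _ * p _)]
    obtain ⟨hβx, hβp⟩ := hβ_commute ⟨i, hi⟩
    rw [hβ_succ, add_mul_pow_eq_pow_add_pow_mul_pow hq2 hodd hβx hβp (hpxi _), ih (by omega),
      sum_filter_val_lt_succ hi]
    abel

/-- at a primitive ℓ-th root of unity (ℓ > 1 odd),
β_i^ℓ = 1 + ∑_{j ≤ i} x_j^ℓ ∂_j^ℓ. -/
theorem stmt_5 (q : ℂ) (l : ℕ) (hl : 1 < l) (hodd : Odd l) (hq : IsPrimitiveRoot q l) (N : ℕ)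
    (A : Type) [Ring A] [Algebra ℂ A]
    (x p : Fin N → A)
    (hxx : ∀ i j : Fin N, i < j → x j * x i = q • (x i * x j))
    (hpp : ∀ i j : Fin N, i < j → p j * p i = q⁻¹ • (p i * p j))
    (hpx : ∀ i j : Fin N, j ≠ i → p j * x i = q • (x i * p j))
    (β : ℕ → A)
    (hβ : ∀ m : ℕ, β m =
      1 + ∑ j ∈ Finset.univ.filter (fun j : Fin N => (j : ℕ) < m), x j * p j)
    (hpxi : ∀ i : Fin N, p i * x i = q ^ 2 • (x i * p i) + (q ^ 2 - 1) • β (i : ℕ)) :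
    ∀ i : ℕ, i ≤ N →
      β i ^ l =
        1 + ∑ j ∈ Finset.univ.filter (fun j : Fin N => (j : ℕ) < i), x j ^ l * p j ^ l :=
  stmt_5_general q l hodd hq N A x p hxx hpp hpx β hβ hpxi
end

section
/- In D_q(C^N), for any n ≥ 1, there exist elements c_1,...,c_{n−1} of the subalgebra D_q(C^{N−1}) such that (x_N ∂_N + β_{N−1})^n = q^{n(n−1)} x_N^n ∂_N^n + Σ_{k=1}^{n−1} c_k x_N^k ∂_N^k + β_{N−1}^n. -/
/-- in D_q(ℂ^{N+1}) (paper's D_q(ℂ^N) with N ≥ 1, here with N+1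
generators indexed by Fin (N+1)), for any n ≥ 1 there exist elements
c_1,…,c_{n−1} of the subalgebra D_q(ℂ^N) generated by the first N pairs of
generators, such that
(x_N ∂_N + β_{N−1})^n = q^{n(n−1)} x_N^n ∂_N^n + ∑_{k=1}^{n−1} c_k x_N^k ∂_N^k + β_{N−1}^n. -/
theorem stmt_8 (q : ℂ) (hq : q ≠ 0) (N : ℕ)
    (A : Type) [Ring A] [Algebra ℂ A]
    (x p : Fin (N + 1) → A)
    (hxx : ∀ i j : Fin (N + 1), i < j → x j * x i = q • (x i * x j))
    (hpp : ∀ i j : Fin (N + 1), i < j → p j * p i = q⁻¹ • (p i * p j))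
    (hpx : ∀ i j : Fin (N + 1), j ≠ i → p j * x i = q • (x i * p j))
    (β : ℕ → A)
    (hβ : ∀ m : ℕ, β m =
      1 + ∑ j ∈ Finset.univ.filter (fun j : Fin (N + 1) => (j : ℕ) < m), x j * p j)
    (hpxi : ∀ i : Fin (N + 1),
      p i * x i = q ^ 2 • (x i * p i) + (q ^ 2 - 1) • β (i : ℕ)) :
    ∀ n : ℕ, 1 ≤ n →
      ∃ c : ℕ → A,
        (∀ k, c k ∈ Algebra.adjoin ℂ
          ((Set.range fun i : Fin N => x i.castSucc) ∪
           (Set.range fun i : Fin N => p i.castSucc))) ∧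
        (x (Fin.last N) * p (Fin.last N) + β N) ^ n =
          q ^ (n * (n - 1)) • (x (Fin.last N) ^ n * p (Fin.last N) ^ n) +
          ∑ k ∈ Finset.Ico 1 n, c k * (x (Fin.last N) ^ k * p (Fin.last N) ^ k) +
          β N ^ n := by
  set X := x (Fin.last N) with hXdef
  set P := p (Fin.last N) with hPdef
  set b := β N with hbdef
  set S : Subalgebra ℂ A := Algebra.adjoin ℂ
      ((Set.range fun i : Fin N => x i.castSucc) ∪
       (Set.range fun i : Fin N => p i.castSucc)) with hSdef
  -- b is in the subalgebra
  have hbS : b ∈ S := by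
    rw [hbdef, hβ]
    refine add_mem (one_mem S) (Subalgebra.sum_mem S fun j hj => ?_)
    simp only [Finset.mem_filter] at hj
    have hjN : (j : ℕ) < N := hj.2
    have hj' : j = (⟨(j : ℕ), hjN⟩ : Fin N).castSucc := by
      ext; simp
    rw [hj']
    exact mul_mem (Algebra.subset_adjoin (Or.inl ⟨_, rfl⟩))
      (Algebra.subset_adjoin (Or.inr ⟨_, rfl⟩))
  -- j < last
  have hlt : ∀ j : Fin (N + 1), (j : ℕ) < N → j < Fin.last N := by
    intro j hj; rwa [Fin.lt_def, Fin.val_last]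
  have hne : ∀ j : Fin (N + 1), (j : ℕ) < N → j ≠ Fin.last N := by
    intro j hj; exact Fin.ne_of_lt (hlt j hj)
  -- b commutes with X
  have hbX : b * X = X * b := by
    rw [hbdef, hβ, add_mul, mul_add, one_mul, mul_one, Finset.sum_mul, Finset.mul_sum]
    congr 1
    refine Finset.sum_congr rfl fun j hj => ?_
    simp only [Finset.mem_filter] at hj
    have hjN : (j : ℕ) < N := hj.2
    have h1 : p j * X = q • (X * p j) := hpx (Fin.last N) j (hne j hjN)
    have h2 : X * x j = q • (x j * X) := hxx j (Fin.last N) (hlt j hjN)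
    calc x j * p j * X = x j * (q • (X * p j)) := by rw [mul_assoc, h1]
      _ = q • (x j * X * p j) := by rw [mul_smul_comm, mul_assoc]
      _ = X * (x j * p j) := by rw [← mul_assoc, h2, smul_mul_assoc]
  -- b commutes with P
  have hbP : b * P = P * b := by
    rw [hbdef, hβ, add_mul, mul_add, one_mul, mul_one, Finset.sum_mul, Finset.mul_sum]
    congr 1
    refine Finset.sum_congr rfl fun j hj => ?_
    simp only [Finset.mem_filter] at hj
    have hjN : (j : ℕ) < N := hj.2
    symm
    have h1 : P * x j = q • (x j * P) := hpx j (Fin.last N) (hne j hjN).symm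
    have h2 : P * p j = q⁻¹ • (p j * P) := hpp j (Fin.last N) (hlt j hjN)
    calc P * (x j * p j) = (q • (x j * P)) * p j := by rw [← mul_assoc, h1]
      _ = q • (x j * (P * p j)) := by rw [smul_mul_assoc, mul_assoc]
      _ = q • (x j * (q⁻¹ • (p j * P))) := by rw [h2]
      _ = (q * q⁻¹) • (x j * p j * P) := by
          rw [mul_smul_comm, smul_smul, mul_assoc]
      _ = x j * p j * P := by rw [mul_inv_cancel₀ hq, one_smul]
  have hCbX : Commute b X := hbX
  have hCbP : Commute b P := hbP
  -- the basic q-commutation for the last pair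
  have hPX : P * X = (q ^ 2 : ℂ) • (X * P) + ((q ^ 2 - 1) : ℂ) • b := by
    have := hpxi (Fin.last N)
    rwa [Fin.val_last] at this
  -- P * X^(k+1)
  have hPXk : ∀ k : ℕ, P * X ^ (k + 1) =
      (q ^ (2 * (k + 1)) : ℂ) • (X ^ (k + 1) * P) +
      ((q ^ (2 * (k + 1)) - 1) : ℂ) • (b * X ^ k) := by
    intro k
    induction k with
    | zero => simpa [mul_one, pow_one] using hPX
    | succ k ih =>
      have e0 : P * X ^ (k + 2) = (P * X ^ (k + 1)) * X := by
        rw [mul_assoc, ← pow_succ]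
      have e1 : X ^ (k + 1) * (X * P) = X ^ (k + 2) * P := by
        rw [← mul_assoc, ← pow_succ]
      have e2 : X ^ (k + 1) * b = b * X ^ (k + 1) := (hCbX.pow_right (k + 1)).eq.symm
      have e3 : (b * X ^ k) * X = b * X ^ (k + 1) := by rw [mul_assoc, ← pow_succ]
      rw [e0, ih, add_mul, smul_mul_assoc, smul_mul_assoc, e3, mul_assoc, hPX,
        mul_add (X ^ (k + 1)), mul_smul_comm, mul_smul_comm, e1, e2, smul_add,
        smul_smul, smul_smul]
      match_scalars <;> ring
  -- key step lemma
  have hkey : ∀ k : ℕ, (X * P + b) * (X ^ k * P ^ k) =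
      (q ^ (2 * k) : ℂ) • (X ^ (k + 1) * P ^ (k + 1)) +
      (q ^ (2 * k) : ℂ) • (b * (X ^ k * P ^ k)) := by
    intro k
    match k with
    | 0 => simp
    | (k + 1) =>
      have e1 : X * (X ^ (k + 1) * P) * P ^ (k + 1) = X ^ (k + 2) * P ^ (k + 2) := by
        rw [← mul_assoc, ← pow_succ', mul_assoc, ← pow_succ']
      have e2 : X * (b * X ^ k) * P ^ (k + 1) = b * (X ^ (k + 1) * P ^ (k + 1)) := by
        rw [← mul_assoc, ← hbX, mul_assoc b X, ← pow_succ', mul_assoc]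
      calc (X * P + b) * (X ^ (k + 1) * P ^ (k + 1))
          = X * (P * X ^ (k + 1)) * P ^ (k + 1) + b * (X ^ (k + 1) * P ^ (k + 1)) := by
            rw [add_mul, mul_assoc X P (X ^ (k + 1) * P ^ (k + 1)),
              ← mul_assoc P (X ^ (k + 1)) (P ^ (k + 1)),
              ← mul_assoc X (P * X ^ (k + 1)) (P ^ (k + 1))]
        _ = (q ^ (2 * (k + 1)) : ℂ) • (X ^ (k + 2) * P ^ (k + 2)) +
            ((q ^ (2 * (k + 1)) - 1) : ℂ) • (b * (X ^ (k + 1) * P ^ (k + 1))) +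
            b * (X ^ (k + 1) * P ^ (k + 1)) := by
            rw [hPXk k, mul_add (X), mul_smul_comm, mul_smul_comm, add_mul,
              smul_mul_assoc, smul_mul_assoc, e1, e2]
        _ = (q ^ (2 * (k + 1)) : ℂ) • (X ^ (k + 2) * P ^ (k + 2)) +
            (q ^ (2 * (k + 1)) : ℂ) • (b * (X ^ (k + 1) * P ^ (k + 1))) := by
            rw [add_assoc]
            congr 1
            match_scalars <;> ring
  -- the main induction
  have hL : ∀ n : ℕ, ∃ c : ℕ → A,
      c 0 = b ^ n ∧
      c n = (q ^ (n * (n - 1)) : ℂ) • (1 : A) ∧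
      (∀ k, n < k → c k = 0) ∧
      (∀ k, c k ∈ S) ∧
      (∀ k, Commute (c k) X ∧ Commute (c k) P ∧ Commute (c k) b) ∧
      (X * P + b) ^ n = ∑ k ∈ Finset.range (n + 1), c k * (X ^ k * P ^ k) := by
    intro n
    induction n with
    | zero =>
      refine ⟨fun k => if k = 0 then 1 else 0, by simp, by simp, ?_, ?_, ?_, by simp⟩
      · intro k hk
        have hk' : k ≠ 0 := by omega
        simp [hk']
      · intro k
        by_cases hk : k = 0
        · simpa [hk] using one_mem S
        · simpa [hk] using zero_mem S
      · intro k; by_cases hk : k = 0 <;> simp [hk]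
    | succ n ih =>
      obtain ⟨c, hc0, hcn, hctop, hcS, hcC, hcsum⟩ := ih
      refine ⟨fun k => (if k = 0 then 0 else (q ^ (2 * (k - 1)) : ℂ) • c (k - 1)) +
          (q ^ (2 * k) : ℂ) • (b * c k), ?_, ?_, ?_, ?_, ?_, ?_⟩
      · simp [hc0, pow_succ']
      · have h1 : c (n + 1) = 0 := hctop (n + 1) (Nat.lt_succ_self n)
        simp only [Nat.add_sub_cancel, if_neg (Nat.succ_ne_zero n), h1, mul_zero, smul_zero,
          add_zero, hcn, smul_smul]
        congr 1
        rw [← pow_add]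
        congr 1
        cases n with
        | zero => simp
        | succ m => simp [Nat.succ_sub_one]; ring
      · intro k hk
        have h1 : c (k - 1) = 0 := hctop (k - 1) (by omega)
        have h2 : c k = 0 := hctop k (by omega)
        simp [h1, h2]
      · intro k
        refine add_mem ?_ (SMulMemClass.smul_mem _ (mul_mem hbS (hcS k)))
        split
        · exact zero_mem S
        · exact SMulMemClass.smul_mem _ (hcS (k - 1))
      · intro k
        refine ⟨?_, ?_, ?_⟩
        · refine Commute.add_left ?_ (((hCbX.mul_left (hcC k).1)).smul_left _)
          split
          · exact Commute.zero_left _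
          · exact ((hcC (k - 1)).1).smul_left _
        · refine Commute.add_left ?_ (((hCbP.mul_left (hcC k).2.1)).smul_left _)
          split
          · exact Commute.zero_left _
          · exact ((hcC (k - 1)).2.1).smul_left _
        · refine Commute.add_left ?_ ((((Commute.refl b).mul_left (hcC k).2.2)).smul_left _)
          split
          · exact Commute.zero_left _
          · exact ((hcC (k - 1)).2.2).smul_left _
      · -- the sum identity
        have hcT : ∀ k, Commute (c k) (X * P + b) :=
          fun k => (((hcC k).1.mul_right (hcC k).2.1)).add_right (hcC k).2.2
        calc (X * P + b) ^ (n + 1) = (X * P + b) * (X * P + b) ^ n := by rw [pow_succ']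
          _ = ∑ k ∈ Finset.range (n + 1), (X * P + b) * (c k * (X ^ k * P ^ k)) := by
              rw [hcsum, Finset.mul_sum]
          _ = ∑ k ∈ Finset.range (n + 1),
                ((q ^ (2 * k) : ℂ) • (c k * (X ^ (k + 1) * P ^ (k + 1))) +
                 (q ^ (2 * k) : ℂ) • ((b * c k) * (X ^ k * P ^ k))) := by
              refine Finset.sum_congr rfl fun k _ => ?_
              rw [← mul_assoc, ← (hcT k).eq, mul_assoc, hkey k, mul_add,
                mul_smul_comm, mul_smul_comm, ← mul_assoc (c k) b, (hcC k).2.2.eq,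
                mul_assoc]
          _ = ∑ k ∈ Finset.range (n + 2),
                ((if k = 0 then 0 else (q ^ (2 * (k - 1)) : ℂ) • c (k - 1)) +
                 (q ^ (2 * k) : ℂ) • (b * c k)) * (X ^ k * P ^ k) := by
              have hsplit : ∑ k ∈ Finset.range (n + 2),
                  ((if k = 0 then 0 else (q ^ (2 * (k - 1)) : ℂ) • c (k - 1)) +
                   (q ^ (2 * k) : ℂ) • (b * c k)) * (X ^ k * P ^ k)
                  = (∑ k ∈ Finset.range (n + 1),
                      (q ^ (2 * k) : ℂ) • (c k * (X ^ (k + 1) * P ^ (k + 1))))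
                  + (∑ k ∈ Finset.range (n + 1),
                      (q ^ (2 * k) : ℂ) • ((b * c k) * (X ^ k * P ^ k))) := by
                simp only [add_mul]
                rw [Finset.sum_add_distrib]
                congr 1
                · rw [Finset.sum_range_succ' _ (n + 1)]
                  simp [smul_mul_assoc]
                · rw [Finset.sum_range_succ, hctop (n + 1) (Nat.lt_succ_self n)]
                  simp [smul_mul_assoc]
              rw [hsplit, Finset.sum_add_distrib]
  -- conclude
  intro n hn
  obtain ⟨c, hc0, hcn, hctop, hcS, hcC, hcsum⟩ := hL n
  refine ⟨c, hcS, ?_⟩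
  have hrange : Finset.range n = insert 0 (Finset.Ico 1 n) := by
    ext a; simp only [Finset.mem_range, Finset.mem_insert, Finset.mem_Ico]; omega
  rw [hcsum, Finset.sum_range_succ, hrange, Finset.sum_insert (by simp), hc0, hcn]
  rw [smul_mul_assoc, one_mul]
  simp only [pow_zero, mul_one]
  abel
end

section
/- In the reflection equation algebra O_q⁺(GL_2), the quantum trace tr_q = a + q^{−2} d is central. -/
noncomputable section

/-- Generators of the reflection equation algebra O_q⁺(GL₂). -/
inductive OGen : Type
  | a | b | c | d

/-- Generators inside the free algebra. -/
def Af : FreeAlgebra ℂ OGen := FreeAlgebra.ι ℂ OGen.a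
def Bf : FreeAlgebra ℂ OGen := FreeAlgebra.ι ℂ OGen.b
def Cf : FreeAlgebra ℂ OGen := FreeAlgebra.ι ℂ OGen.c
def Df : FreeAlgebra ℂ OGen := FreeAlgebra.ι ℂ OGen.d

/-- The defining relations of O_q⁺(GL₂). -/
inductive OqRel (q : ℂ) : FreeAlgebra ℂ OGen → FreeAlgebra ℂ OGen → Prop
  | da : OqRel q (Df * Af) (Af * Df)
  | db : OqRel q (Df * Bf) (q ^ 2 • (Bf * Df))
  | dc : OqRel q (Df * Cf) (q⁻¹ ^ 2 • (Cf * Df))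
  | cb : OqRel q (Cf * Bf) (Bf * Cf + (1 - q⁻¹ ^ 2) • (Af * Df - Df * Df))
  | ba : OqRel q (Bf * Af) (Af * Bf + (1 - q⁻¹ ^ 2) • (Bf * Df))
  | ca : OqRel q (Cf * Af) (Af * Cf + (q⁻¹ ^ 2 - 1) • (Df * Cf))

/-- The reflection equation algebra O_q⁺(GL₂), presented by generators and relations. -/
abbrev OqGL2 (q : ℂ) := RingQuot (OqRel q)

/-- The images of the generators a, b, c, d in O_q⁺(GL₂). -/
def ag (q : ℂ) : OqGL2 q := RingQuot.mkAlgHom ℂ (OqRel q) Af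
def bg (q : ℂ) : OqGL2 q := RingQuot.mkAlgHom ℂ (OqRel q) Bf
def cg (q : ℂ) : OqGL2 q := RingQuot.mkAlgHom ℂ (OqRel q) Cf
def dg (q : ℂ) : OqGL2 q := RingQuot.mkAlgHom ℂ (OqRel q) Df

lemma rel_da (q : ℂ) : dg q * ag q = ag q * dg q := by
  have := RingQuot.mkAlgHom_rel ℂ (OqRel.da (q := q))
  simpa [ag, dg] using this

lemma rel_db (q : ℂ) : dg q * bg q = q ^ 2 • (bg q * dg q) := by
  have := RingQuot.mkAlgHom_rel ℂ (OqRel.db (q := q))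
  simpa [bg, dg] using this

lemma rel_dc (q : ℂ) : dg q * cg q = q⁻¹ ^ 2 • (cg q * dg q) := by
  have := RingQuot.mkAlgHom_rel ℂ (OqRel.dc (q := q))
  simpa [cg, dg] using this

lemma rel_ba (q : ℂ) : bg q * ag q = ag q * bg q + (1 - q⁻¹ ^ 2) • (bg q * dg q) := by
  have := RingQuot.mkAlgHom_rel ℂ (OqRel.ba (q := q))
  simpa [ag, bg, dg] using this

lemma rel_ca (q : ℂ) : cg q * ag q = ag q * cg q + (q⁻¹ ^ 2 - 1) • (dg q * cg q) := by
  have := RingQuot.mkAlgHom_rel ℂ (OqRel.ca (q := q))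
  simpa [ag, cg, dg] using this

/-- the quantum trace tr_q = a + q^{−2}d is central in O_q⁺(GL₂). -/
theorem stmt_10 (q : ℂ) (hq : q ≠ 0) :
    ag q + q⁻¹ ^ 2 • dg q ∈ Subalgebra.center ℂ (OqGL2 q) := by
  set T := ag q + q⁻¹ ^ 2 • dg q with hT
  have hqq : q⁻¹ ^ 2 * q ^ 2 = 1 := by
    field_simp
  have hA : T * ag q = ag q * T := by
    rw [hT, add_mul, mul_add, smul_mul_assoc, mul_smul_comm, rel_da]
  have hD : T * dg q = dg q * T := by
    rw [hT, add_mul, mul_add, smul_mul_assoc, mul_smul_comm, rel_da]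
  have hB : T * bg q = bg q * T := by
    rw [hT, add_mul, mul_add, smul_mul_assoc, mul_smul_comm, rel_db, rel_ba,
      smul_smul, hqq, one_smul]
    module
  have hC : T * cg q = cg q * T := by
    rw [hT, add_mul, mul_add, smul_mul_assoc, mul_smul_comm, rel_ca, rel_dc]
    module
  rw [Subalgebra.mem_center_iff]
  intro y
  obtain ⟨z, rfl⟩ := RingQuot.mkAlgHom_surjective ℂ (OqRel q) y
  induction z using FreeAlgebra.induction with
  | grade0 r => simp [Algebra.commutes]
  | grade1 i =>
    cases i
    · exact (hA).symm
    · exact (hB).symm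
    · exact (hC).symm
    · exact (hD).symm
  | mul x y hx hy =>
    rw [map_mul, mul_assoc, hy, ← mul_assoc, hx, mul_assoc]
  | add x y hx hy =>
    rw [map_add, add_mul, hx, hy, ← mul_add]
end
end

section
/- In O_q⁺(GL_2), for all n ≥ 1: c^n b = b c^n + (q^{2(n−1)} − q^{−2}) a d c^{n−1} + (q^{−2n} − 1) c^{n−1} d². -/
/-- in O_q⁺(GL₂), for n ≥ 1:
c^n b = b c^n + (q^{2(n−1)} − q^{−2}) a d c^{n−1} + (q^{−2n} − 1) c^{n−1} d². -/
theorem stmt_13 (q : ℂ) (hq : q ≠ 0)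
    (A : Type) [Ring A] [Algebra ℂ A] (a b c d : A)
    (hda : d * a = a * d)
    (hdb : d * b = q ^ 2 • (b * d))
    (hdc : d * c = q⁻¹ ^ 2 • (c * d))
    (hcb : c * b = b * c + (1 - q⁻¹ ^ 2) • (a * d - d * d))
    (hba : b * a = a * b + (1 - q⁻¹ ^ 2) • (b * d))
    (hca : c * a = a * c + (q⁻¹ ^ 2 - 1) • (d * c)) :
    ∀ n : ℕ, 1 ≤ n →
      c ^ n * b = b * c ^ n + (q ^ (2 * (n - 1)) - q⁻¹ ^ 2) • (a * d * c ^ (n - 1))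
        + (q⁻¹ ^ (2 * n) - 1) • (c ^ (n - 1) * d ^ 2) := by
  have hq2 : q ^ 2 ≠ 0 := pow_ne_zero _ hq
  -- c*d = q^2 • (d*c)
  have hcd : c * d = q ^ 2 • (d * c) := by
    rw [hdc, smul_smul]
    have : q ^ 2 * q⁻¹ ^ 2 = 1 := by field_simp
    rw [this, one_smul]
  -- d * c^m = q⁻¹^(2m) • (c^m * d)
  have hdcn : ∀ m : ℕ, d * c ^ m = q⁻¹ ^ (2 * m) • (c ^ m * d) := by
    intro m
    induction m with
    | zero => simp
    | succ m ih =>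
      rw [pow_succ, ← mul_assoc, ih, smul_mul_assoc, mul_assoc, hdc, mul_smul_comm,
        smul_smul, ← mul_assoc, ← pow_succ]
      module
  intro n hn
  induction n, hn using Nat.le_induction with
  | base =>
    simp only [pow_one, Nat.sub_self, pow_zero, mul_one, one_mul, mul_zero]
    rw [hcb, pow_two d]
    module
  | succ n hn ih =>
    have hdd : d * (d * c ^ n) = q⁻¹ ^ (4 * n) • (c ^ n * d ^ 2) := by
      rw [hdcn, mul_smul_comm, ← mul_assoc, hdcn, smul_mul_assoc, smul_smul,
        mul_assoc, ← pow_two d]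
      module
    have hstep : c ^ (n + 1) * b = c * (c ^ n * b) := by
      rw [pow_succ', mul_assoc]
    rw [hstep, ih]
    simp only [Nat.add_sub_cancel]
    rw [mul_add, mul_add, mul_smul_comm, mul_smul_comm]
    -- term 1 : c * (b * c^n)
    have h1 : c * (b * c ^ n) = b * c ^ (n + 1)
        + (1 - q⁻¹ ^ 2) • (a * d * c ^ n)
        - ((1 - q⁻¹ ^ 2) * q⁻¹ ^ (4 * n)) • (c ^ n * d ^ 2) := by
      rw [← mul_assoc, hcb, add_mul, smul_mul_assoc, sub_mul, mul_assoc d d, hdd,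
        mul_assoc b c, ← pow_succ']
      module
    -- term 2 : c * (a * d * c ^ (n-1))
    have h2 : c * (a * d * c ^ (n - 1)) = q ^ 2 • (a * d * c ^ n)
        + ((q⁻¹ ^ 2 - 1) * q ^ 2 * q⁻¹ ^ (4 * n)) • (c ^ n * d ^ 2) := by
      have hpow : c * c ^ (n - 1) = c ^ n := by
        rw [← pow_succ']
        congr 1
        omega
      have hcdc : c * d * c ^ (n - 1) = q ^ 2 • (d * c ^ n) := by
        rw [hcd, smul_mul_assoc, mul_assoc, hpow]
      calc c * (a * d * c ^ (n - 1))
          = (c * a) * (d * c ^ (n - 1)) := by rw [← mul_assoc, ← mul_assoc,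
            mul_assoc (c * a)]
        _ = (a * c + (q⁻¹ ^ 2 - 1) • (d * c)) * (d * c ^ (n - 1)) := by rw [hca]
        _ = a * (c * d * c ^ (n - 1))
            + (q⁻¹ ^ 2 - 1) • (d * (c * d * c ^ (n - 1))) := by
            rw [add_mul, smul_mul_assoc]
            simp only [mul_assoc]
        _ = q ^ 2 • (a * (d * c ^ n))
            + ((q⁻¹ ^ 2 - 1) * q ^ 2) • (d * (d * c ^ n)) := by
            rw [hcdc, mul_smul_comm, mul_smul_comm, smul_smul]
        _ = _ := by
            rw [hdd, ← mul_assoc a d]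
            module
    -- term 3 : c * (c^(n-1) * d^2)
    have h3 : c * (c ^ (n - 1) * d ^ 2) = c ^ n * d ^ 2 := by
      rw [← mul_assoc, ← pow_succ']
      congr 2
      omega
    rw [h1, h2, h3]
    have e1' : q ^ (2 * (n - 1)) = q ^ (2 * n) * (q ^ 2)⁻¹ := by
      rw [eq_mul_inv_iff_mul_eq₀ hq2, ← pow_add]
      congr 1
      omega
    match_scalars <;> simp only [e1', inv_pow] <;> field_simp <;> ring
end

section
/- Suppose q is a primitive cube root of unity (ℓ = 3). Then in O_q⁺(GL_2), the element z = a³ + 3abc + 3q·bcd is central, and det_q³ = z d³ − b³ c³, where det_q = ad − q² bc. -/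
/-
At a primitive cube root of unity q⁻² = q, and the defining relations become rewriting rules
that bring every monomial into the normal order a < b < c < d. Both claims are then identities
between normally ordered expressions whose coefficients agree modulo q² + q + 1, and centrality
only needs to be checked against the generators.
-/

noncomputable section

theorem mul_mul_of_mul_eq {M : Type*} [Semigroup M] {x y w : M} (h : x * y = w) (t : M) :
    x * (y * t) = w * t := by
  rw [← mul_assoc, h]

theorem RingQuot.mem_center_of_commute_ι {R X : Type*} [CommSemiring R]
    {r : FreeAlgebra R X → FreeAlgebra R X → Prop} {z : RingQuot r}
    (h : ∀ x, Commute (RingQuot.mkAlgHom R r (FreeAlgebra.ι R x)) z) :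
    z ∈ Subalgebra.center R (RingQuot r) := by
  rw [Subalgebra.mem_center_iff]
  intro y
  obtain ⟨y, rfl⟩ := RingQuot.mkAlgHom_surjective R r y
  induction y using FreeAlgebra.induction with
  | grade0 s => rw [AlgHom.commutes]; exact Algebra.commutes s z
  | grade1 x => exact h x
  | mul u v hu hv => rw [map_mul, mul_assoc, hv, ← mul_assoc, hu, mul_assoc]
  | add u v hu hv => rw [map_add, add_mul, mul_add, hu, hv]

theorem inv_sq_eq_of_sq_add_add_one_eq_zero {K : Type*} [Field K] {q : K}
    (hq : q ^ 2 + q + 1 = 0) : q⁻¹ ^ 2 = q := by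
  have hq0 : q ≠ 0 := by rintro rfl; norm_num at hq
  field_simp
  linear_combination (1 - q) * hq

namespace OqGL2

variable (q : ℂ)

theorem dg_mul_ag : dg q * ag q = ag q * dg q := by
  simpa only [ag, dg, map_mul] using RingQuot.mkAlgHom_rel ℂ (OqRel.da (q := q))

theorem dg_mul_bg : dg q * bg q = q ^ 2 • (bg q * dg q) := by
  simpa only [bg, dg, map_mul, map_smul] using RingQuot.mkAlgHom_rel ℂ (OqRel.db (q := q))

theorem dg_mul_cg : dg q * cg q = q⁻¹ ^ 2 • (cg q * dg q) := by
  simpa only [cg, dg, map_mul, map_smul] using RingQuot.mkAlgHom_rel ℂ (OqRel.dc (q := q))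

theorem cg_mul_bg :
    cg q * bg q = bg q * cg q + (1 - q⁻¹ ^ 2) • (ag q * dg q - dg q * dg q) := by
  simpa only [ag, bg, cg, dg, map_mul, map_smul, map_add, map_sub] using
    RingQuot.mkAlgHom_rel ℂ (OqRel.cb (q := q))

theorem bg_mul_ag : bg q * ag q = ag q * bg q + (1 - q⁻¹ ^ 2) • (bg q * dg q) := by
  simpa only [ag, bg, dg, map_mul, map_smul, map_add] using
    RingQuot.mkAlgHom_rel ℂ (OqRel.ba (q := q))

theorem cg_mul_ag : cg q * ag q = ag q * cg q + (q⁻¹ ^ 2 - 1) • (dg q * cg q) := by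
  simpa only [ag, cg, dg, map_mul, map_smul, map_add] using
    RingQuot.mkAlgHom_rel ℂ (OqRel.ca (q := q))

def z : OqGL2 q :=
  ag q ^ 3 + (3 : ℂ) • (ag q * bg q * cg q) + (3 * q) • (bg q * cg q * dg q)

def qdet : OqGL2 q := ag q * dg q - q ^ 2 • (bg q * cg q)

variable {q}

theorem commute_generators_z (hq : q ^ 2 + q + 1 = 0) :
    Commute (ag q) (z q) ∧ Commute (bg q) (z q) ∧ Commute (cg q) (z q) ∧
      Commute (dg q) (z q) := by
  have hinv := inv_sq_eq_of_sq_add_add_one_eq_zero hq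
  refine ⟨?_, ?_, ?_, ?_⟩ <;>
  · simp only [Commute, SemiconjBy, z, pow_three, mul_assoc, mul_add, add_mul, mul_sub, sub_mul,
      smul_mul_assoc, mul_smul_comm, smul_smul, smul_add, smul_sub, hinv,
      dg_mul_ag, dg_mul_bg, dg_mul_cg, cg_mul_bg, bg_mul_ag, cg_mul_ag,
      mul_mul_of_mul_eq (dg_mul_ag q), mul_mul_of_mul_eq (dg_mul_bg q),
      mul_mul_of_mul_eq (dg_mul_cg q), mul_mul_of_mul_eq (cg_mul_bg q),
      mul_mul_of_mul_eq (bg_mul_ag q), mul_mul_of_mul_eq (cg_mul_ag q)]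
    match_scalars <;> grind

theorem qdet_pow_three (hq : q ^ 2 + q + 1 = 0) :
    qdet q ^ 3 = z q * dg q ^ 3 - bg q ^ 3 * cg q ^ 3 := by
  have hinv := inv_sq_eq_of_sq_add_add_one_eq_zero hq
  simp only [qdet, z, pow_three, mul_assoc, mul_add, add_mul, mul_sub, sub_mul,
    smul_mul_assoc, mul_smul_comm, smul_smul, smul_add, smul_sub, hinv, dg_mul_cg,
    mul_mul_of_mul_eq (dg_mul_ag q), mul_mul_of_mul_eq (dg_mul_bg q),
    mul_mul_of_mul_eq (dg_mul_cg q), mul_mul_of_mul_eq (cg_mul_bg q),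
    mul_mul_of_mul_eq (bg_mul_ag q), mul_mul_of_mul_eq (cg_mul_ag q)]
  match_scalars <;> grind

end OqGL2

/-- for q a primitive cube root of unity, z = a³ + 3abc + 3q·bcd
is central in O_q⁺(GL₂) and det_q³ = z d³ − b³c³, where det_q = ad − q²bc. -/
theorem stmt_16 (q : ℂ) (hq : IsPrimitiveRoot q 3) :
    (ag q ^ 3 + (3 : ℂ) • (ag q * bg q * cg q) + (3 * q) • (bg q * cg q * dg q)) ∈
      Subalgebra.center ℂ (OqGL2 q) ∧
    (ag q * dg q - q ^ 2 • (bg q * cg q)) ^ 3 =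
      (ag q ^ 3 + (3 : ℂ) • (ag q * bg q * cg q) + (3 * q) • (bg q * cg q * dg q)) * dg q ^ 3
        - bg q ^ 3 * cg q ^ 3 := by
  have hq' : q ^ 2 + q + 1 = 0 := by
    have := hq.geom_sum_eq_zero (by norm_num)
    simp only [Finset.sum_range_succ, Finset.sum_range_zero] at this
    linear_combination this
  obtain ⟨ha, hb, hc, hd⟩ := OqGL2.commute_generators_z hq'
  refine ⟨RingQuot.mem_center_of_commute_ι fun x => ?_, OqGL2.qdet_pow_three hq'⟩
  cases x
  exacts [ha, hb, hc, hd]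
end
end
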